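/- Let N and d_2 be positive integers and c_min < c_max real numbers. There exists a function h : ℝ → ℝ^{N+1} such that the mapping U sending a pair (Z, x_else), where Z is a multiset of real numbers with elements in [c_min, c_max] and cardinality M with 1 ≤ M ≤ N and x_else ∈ ℝ^{d_2}, to the concatenated vector (∑_{z ∈ Z} h(z), x_else) ∈ ℝ^{(N+1)+d_2}, is injective: if (Z_1, x_else,1) ≠ (Z_2, x_else,2) then U(Z_1, x_else,1) ≠ U(Z_2, x_else,2). -/

import Mathlib

/-!
Use the feature map `h(z) = (1, z, z², …, z^N)`: the sum-pooled representation of a multiset `Z`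
lists its power sums `p₀ = |Z|, p₁, …, p_N`. For `|Z| ≤ N`, Newton's identities recover the
elementary symmetric functions of `Z` from these, hence the polynomial `∏_{z ∈ Z} (X - z)`, whose
roots are `Z`.
-/

open Polynomial

namespace Multiset

theorem mul_esymm_eq_sum {R : Type*} [CommRing R] (s : Multiset R) (k : ℕ) :
    (k : R) * s.esymm k = (-1) ^ (k + 1) *
      ∑ a ∈ Finset.HasAntidiagonal.antidiagonal k with a.1 < k,
        (-1) ^ a.1 * s.esymm a.1 * (s.map (· ^ a.2)).sum := by
  classical
  have hpsum (n : ℕ) : ∑ x : s, (x : R) ^ n = (s.map (· ^ n)).sum := by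
    rw [Finset.sum_eq_multiset_sum]
    exact congrArg Multiset.sum (Multiset.map_univ s (· ^ n))
  have h := congrArg (MvPolynomial.aeval fun x : s => (x : R))
    (MvPolynomial.mul_esymm_eq_sum s R k)
  simpa only [map_mul, map_sum, map_pow, map_natCast, map_neg, map_one, MvPolynomial.psum,
    MvPolynomial.aeval_X, MvPolynomial.aeval_esymm_eq_multiset_esymm, Multiset.map_univ_coe,
    hpsum] using h

variable {R : Type*} [CommRing R] [IsDomain R] [CharZero R]

theorem esymm_eq_of_psum_eq {s t : Multiset R} {n : ℕ}
    (hp : ∀ k, 0 < k → k ≤ n → (s.map (· ^ k)).sum = (t.map (· ^ k)).sum) :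
    ∀ k ≤ n, s.esymm k = t.esymm k := by
  intro k
  induction k using Nat.strong_induction_on with
  | _ k ih =>
    intro hkn
    rcases Nat.eq_zero_or_pos k with rfl | hk
    · simp only [esymm, powersetCard_zero_left, map_singleton, prod_zero, sum_singleton]
    · refine mul_left_cancel₀ (Nat.cast_ne_zero.mpr hk.ne' : (k : R) ≠ 0) ?_
      rw [s.mul_esymm_eq_sum, t.mul_esymm_eq_sum]
      congr 1
      refine Finset.sum_congr rfl fun a ha => ?_
      obtain ⟨hsum, hlt⟩ : a.1 + a.2 = k ∧ a.1 < k := by simpa using ha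
      rw [ih a.1 hlt (by omega), hp a.2 (by omega) (by omega)]

theorem eq_of_card_eq_of_psum_eq {s t : Multiset R} (hcard : card s = card t)
    (hp : ∀ k, 0 < k → k ≤ card s → (s.map (· ^ k)).sum = (t.map (· ^ k)).sum) :
    s = t := by
  have hpoly : (s.map fun a => X - C a).prod = (t.map fun a => X - C a).prod := by
    rw [prod_X_sub_X_eq_sum_esymm, prod_X_sub_X_eq_sum_esymm, ← hcard]
    refine Finset.sum_congr rfl fun j hj => ?_
    rw [esymm_eq_of_psum_eq hp j (Nat.lt_succ_iff.mp (Finset.mem_range.mp hj))]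
  simpa only [roots_multiset_prod_X_sub_C] using congrArg roots hpoly

end Multiset

def powerSumFeature (R : Type*) [Monoid R] (N : ℕ) (z : R) : Fin (N + 1) → R :=
  fun i => z ^ (i : ℕ)

theorem sum_map_powerSumFeature_apply {R : Type*} [CommSemiring R] {N : ℕ} (s : Multiset R)
    (i : Fin (N + 1)) : (s.map (powerSumFeature R N)).sum i = (s.map (· ^ (i : ℕ))).sum := by
  simp only [Pi.multiset_sum_apply, Multiset.map_map, Function.comp_def, powerSumFeature]

theorem injOn_sum_map_powerSumFeature {R : Type*} [CommRing R] [IsDomain R] [CharZero R]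
    (N : ℕ) :
    Set.InjOn (fun s : Multiset R => (s.map (powerSumFeature R N)).sum)
      {s | Multiset.card s ≤ N} := by
  intro s hs t ht hst
  have hpsum (k : ℕ) (hk : k ≤ N) : (s.map (· ^ k)).sum = (t.map (· ^ k)).sum := by
    simpa only [sum_map_powerSumFeature_apply] using congrFun hst ⟨k, Nat.lt_succ_of_le hk⟩
  have hcard : Multiset.card s = Multiset.card t := by
    simpa using hpsum 0 N.zero_le
  exact Multiset.eq_of_card_eq_of_psum_eq hcard fun k _ hk => hpsum k (hk.trans hs)

theorem exists_ESC_injective_general (N d₂ : ℕ) (cmin cmax : ℝ) :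
    ∃ h : ℝ → (Fin (N + 1) → ℝ),
      ∀ (Z₁ Z₂ : Multiset ℝ) (xelse₁ xelse₂ : Fin d₂ → ℝ),
        (∀ z ∈ Z₁, z ∈ Set.Icc cmin cmax) →
        (∀ z ∈ Z₂, z ∈ Set.Icc cmin cmax) →
        1 ≤ Multiset.card Z₁ → Multiset.card Z₁ ≤ N →
        1 ≤ Multiset.card Z₂ → Multiset.card Z₂ ≤ N →
        (Z₁, xelse₁) ≠ (Z₂, xelse₂) →
        ((Z₁.map h).sum, xelse₁) ≠ ((Z₂.map h).sum, xelse₂) := by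
  refine ⟨powerSumFeature ℝ N, fun Z₁ Z₂ x₁ x₂ _ _ _ hZ₁ _ hZ₂ hne heq => hne ?_⟩
  obtain ⟨hsum, rfl⟩ := Prod.mk.inj heq
  rw [injOn_sum_map_powerSumFeature N hZ₁ hZ₂ hsum]

/-- Injectivity of the encoding-sum-and-concatenation (ESC) representation:
there is a feature map `h : ℝ → ℝ^{N+1}` such that the mapping
`U(Z, x_else) = (∑_{z∈Z} h(z), x_else) ∈ ℝ^{(N+1)+d₂}` is injective on pairs
`(Z, x_else)` where `Z` is a multiset with elements in `[cmin, cmax]` and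
cardinality `M` with `1 ≤ M ≤ N`, and `x_else ∈ ℝ^{d₂}`. -/
theorem exists_ESC_injective (N d₂ : ℕ) (hN : 0 < N) (hd₂ : 0 < d₂)
    (cmin cmax : ℝ) (hc : cmin < cmax) :
    ∃ h : ℝ → (Fin (N + 1) → ℝ),
      ∀ (Z₁ Z₂ : Multiset ℝ) (xelse₁ xelse₂ : Fin d₂ → ℝ),
        (∀ z ∈ Z₁, z ∈ Set.Icc cmin cmax) →
        (∀ z ∈ Z₂, z ∈ Set.Icc cmin cmax) →
        1 ≤ Multiset.card Z₁ → Multiset.card Z₁ ≤ N →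
        1 ≤ Multiset.card Z₂ → Multiset.card Z₂ ≤ N →
        (Z₁, xelse₁) ≠ (Z₂, xelse₂) →
        ((Z₁.map h).sum, xelse₁) ≠ ((Z₂.map h).sum, xelse₂) :=
  exists_ESC_injective_general N d₂ cmin cmax
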